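/- Let E and F be Banach spaces. For every m ≥ n, the space 𝒫_w(ⁿE;F) of n-homogeneous polynomials weakly continuous on bounded sets is isomorphic to a closed subspace of 𝒫_w(ᵐE;F). -/

import Mathlib

open NormedSpace Filter Topology

noncomputable section

/-- The Banach-space adjoint of a continuous linear map. -/
def adj (𝕜 : Type*) {A B : Type*} [RCLike 𝕜] [NormedAddCommGroup A] [NormedSpace 𝕜 A]
    [NormedAddCommGroup B] [NormedSpace 𝕜 B] (T : A →L[𝕜] B) :
    StrongDual 𝕜 B →L[𝕜] StrongDual 𝕜 A :=
  (ContinuousLinearMap.compL 𝕜 A B 𝕜).flip T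

/-- A normed space is reflexive if the canonical embedding into its bidual is surjective. -/
def IsReflexive (𝕜 E : Type*) [RCLike 𝕜] [NormedAddCommGroup E] [NormedSpace 𝕜 E] : Prop :=
  Function.Surjective (inclusionInDoubleDual 𝕜 E)
/-- `f : E → F` is weakly continuous on bounded sets: its restriction to every bounded set
is continuous from the weak topology of `E` to the norm topology of `F`. -/
def WCB (𝕜 E F : Type*) [RCLike 𝕜] [NormedAddCommGroup E] [NormedSpace 𝕜 E]
    [NormedAddCommGroup F] [NormedSpace 𝕜 F] (f : E → F) : Prop :=
  ∀ B : Set E, Bornology.IsBounded B →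
    ContinuousOn (fun x : WeakSpace 𝕜 E => f x) (B : Set (WeakSpace 𝕜 E))

variable (𝕜 E F : Type*) [RCLike 𝕜] [NormedAddCommGroup E] [NormedSpace 𝕜 E]
    [NormedAddCommGroup F] [NormedSpace 𝕜 F]

/-- The space `𝒫(ⁿE;F)` of continuous `n`-homogeneous polynomials, modelled as the space of
continuous symmetric `n`-linear maps (a polynomial being the diagonal of such a map). -/
def Psym (n : ℕ) : Submodule 𝕜 (ContinuousMultilinearMap 𝕜 (fun _ : Fin n => E) F) where
  carrier := {A | ∀ (σ : Equiv.Perm (Fin n)) (v : Fin n → E), A (v ∘ σ) = A v}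
  add_mem' := fun ha hb σ v => by simp [ha σ v, hb σ v]
  zero_mem' := fun σ v => by simp
  smul_mem' := fun c a ha σ v => by simp [ha σ v]

/-- The space `𝒫_w(ⁿE;F)` of continuous `n`-homogeneous polynomials that are weakly continuous
on bounded sets, modelled via symmetric `n`-linear maps whose diagonal is weakly continuous on
bounded sets. -/
def Pw (n : ℕ) : Submodule 𝕜 (ContinuousMultilinearMap 𝕜 (fun _ : Fin n => E) F) where
  carrier := {A | (∀ (σ : Equiv.Perm (Fin n)) (v : Fin n → E), A (v ∘ σ) = A v) ∧
    WCB 𝕜 E F (fun x => A fun _ => x)}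
  add_mem' := fun {a b} ha hb => ⟨fun σ v => by simp [ha.1 σ v, hb.1 σ v],
    fun B hB => (ha.2 B hB).add (hb.2 B hB)⟩
  zero_mem' := ⟨fun σ v => by simp, fun B hB => continuousOn_const (c := (0 : F))⟩
  smul_mem' := fun c a ha => ⟨fun σ v => by simp [ha.1 σ v],
    fun B hB => (ha.2 B hB).const_smul c⟩


/-! Fix `φ` and `y` with `φ y = 1`. Multiplying an `n`-homogeneous polynomial by `φ` gives, on
the level of symmetric multilinear maps, `mulDual φ A v = ∑ i, φ (v i) • A (v without i)`, which
preserves weak continuity on bounded sets. On symmetric maps it has the continuous left inverse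
`divDual φ y`, so it is an antilipschitz closed embedding `𝒫_w(ⁿE;F) → 𝒫_w(ⁿ⁺¹E;F)` even though
`E` and `F` need not be complete; composing `m - n` of these steps gives the theorem. -/

open Function

theorem Topology.IsClosedEmbedding.of_comp_of_t2 {X Y Z : Type*} [TopologicalSpace X]
    [TopologicalSpace Y] [TopologicalSpace Z] [T2Space Y] {f : X → Y} {g : Y → Z}
    (hf : Continuous f) (hg : Continuous g) (hgf : IsClosedEmbedding (g ∘ f)) :
    IsClosedEmbedding f :=
  .of_continuous_injective_isClosedMap hf hgf.injective.of_comp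
    (isProperMap_of_comp_of_t2 hf hg hgf.isProperMap).isClosedMap

theorem Fin.range_perm_comp_succAbove {n : ℕ} (σ : Equiv.Perm (Fin (n + 1))) (i : Fin (n + 1)) :
    Set.range (σ ∘ i.succAbove) = Set.range (σ i).succAbove := by
  rw [Set.range_comp, Fin.range_succAbove, Fin.range_succAbove, Equiv.image_compl,
    Set.image_singleton]

variable {𝕜 E F}

namespace Psym

variable {n : ℕ} {A : E [×n]→L[𝕜] F}

theorem apply_comp_eq (hA : A ∈ Psym 𝕜 E F n) {m : ℕ} {f g : Fin n → Fin m}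
    (hf : Injective f) (hg : Injective g) (hfg : Set.range f = Set.range g) (v : Fin m → E) :
    A (v ∘ f) = A (v ∘ g) := by
  let σ : Equiv.Perm (Fin n) :=
    (Equiv.ofInjective f hf).trans ((Equiv.setCongr hfg).trans (Equiv.ofInjective g hg).symm)
  have hσ : g ∘ σ = f := funext fun i => by simp [σ, Equiv.apply_ofInjective_symm]
  rw [← hσ]
  exact hA σ (v ∘ g)

theorem apply_removeNth_eq (hA : A ∈ Psym 𝕜 E F n) {v : Fin (n + 1) → E} {a b : Fin (n + 1)}
    (hab : v a = v b) : A (a.removeNth v) = A (b.removeNth v) := by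
  have hv : v ∘ Equiv.swap a b = v := by
    funext i
    rcases eq_or_ne i a with rfl | hia
    · simp [hab]
    rcases eq_or_ne i b with rfl | hib
    · simp [hab]
    · simp [Equiv.swap_apply_of_ne_of_ne hia hib]
  calc A (a.removeNth v) = A (v ∘ (Equiv.swap a b ∘ a.succAbove)) := by
        rw [← comp_assoc, hv]; rfl
    _ = A (b.removeNth v) :=
        apply_comp_eq hA ((Equiv.injective _).comp Fin.succAbove_right_injective)
          Fin.succAbove_right_injective
          (by rw [Fin.range_perm_comp_succAbove, Equiv.swap_apply_left]) v

end Psym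

theorem isClosed_Psym (n : ℕ) : IsClosed (Psym 𝕜 E F n : Set (E [×n]→L[𝕜] F)) := by
  simp only [Psym, Submodule.coe_set_mk, AddSubmonoid.coe_set_mk, AddSubsemigroup.coe_set_mk,
    Set.ofPred_forall]
  exact isClosed_iInter fun σ => isClosed_iInter fun v =>
    isClosed_eq (continuous_eval_const _) (continuous_eval_const _)

theorem tendstoUniformlyOn_diag {ι : Type*} {l : Filter ι} {n : ℕ} {A : ι → E [×n]→L[𝕜] F}
    {A₀ : E [×n]→L[𝕜] F} (hA : Tendsto A l (𝓝 A₀)) {B : Set E} (hB : Bornology.IsBounded B) :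
    TendstoUniformlyOn (fun i x => A i fun _ => x) (fun x => A₀ fun _ => x) l B := by
  have hunif := UniformOnFun.tendsto_iff_tendstoUniformlyOn.1
    ((ContinuousMultilinearMap.isUniformEmbedding_toUniformOnFun.isUniformInducing.isInducing
      |>.continuous.tendsto A₀).comp hA)
  have hdiag : Bornology.IsVonNBounded 𝕜 (Set.pi Set.univ fun _ : Fin n => B) :=
    (NormedSpace.isVonNBounded_iff 𝕜).2 (Bornology.IsBounded.pi fun _ => hB)
  exact ((hunif _ hdiag).comp fun x _ => x).mono fun x hx _ _ => hx

theorem isClosed_setOf_WCB (n : ℕ) :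
    IsClosed {A : E [×n]→L[𝕜] F | WCB 𝕜 E F fun x => A fun _ => x} := by
  refine isClosed_iff_forall_filter.2 fun A₀ l _ hl hlA B hB =>
    TendstoUniformlyOn.continuousOn (α := WeakSpace 𝕜 E)
      (tendstoUniformlyOn_diag (tendsto_id'.2 hlA) hB) ?_
  exact Eventually.frequently (mem_of_superset (le_principal_iff.mp hl) fun A hA => hA B hB)

theorem isClosed_Pw (n : ℕ) : IsClosed (Pw 𝕜 E F n : Set (E [×n]→L[𝕜] F)) :=
  (isClosed_Psym n).inter (isClosed_setOf_WCB n)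

section MulDual

variable (φ : StrongDual 𝕜 E)

def mulDual (n : ℕ) : (E [×n]→L[𝕜] F) →L[𝕜] E [×n + 1]→L[𝕜] F :=
  ∑ i : Fin (n + 1), ((ContinuousMultilinearMap.curryMidEquiv 𝕜 (fun _ => E) F i).symm :
      (E →L[𝕜] E [×n]→L[𝕜] F) →L[𝕜] _) ∘L ContinuousLinearMap.smulRightL 𝕜 E _ φ

variable {φ}

theorem mulDual_apply {n : ℕ} (A : E [×n]→L[𝕜] F) (v : Fin (n + 1) → E) :
    mulDual φ n A v = ∑ i, φ (v i) • A (i.removeNth v) := by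
  simp [mulDual]; rfl

theorem mulDual_mem_Psym {n : ℕ} {A : E [×n]→L[𝕜] F} (hA : A ∈ Psym 𝕜 E F n) :
    mulDual φ n A ∈ Psym 𝕜 E F (n + 1) := by
  intro σ v
  rw [mulDual_apply, mulDual_apply, ← Equiv.sum_comp σ (fun i => φ (v i) • A (i.removeNth v))]
  refine Finset.sum_congr rfl fun i _ => congrArg (φ (v (σ i)) • ·) ?_
  exact Psym.apply_comp_eq hA ((Equiv.injective σ).comp Fin.succAbove_right_injective)
    Fin.succAbove_right_injective (Fin.range_perm_comp_succAbove σ i) v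

theorem mulDual_mem_Pw {n : ℕ} {A : E [×n]→L[𝕜] F} (hA : A ∈ Pw 𝕜 E F n) :
    mulDual φ n A ∈ Pw 𝕜 E F (n + 1) :=
  ⟨mulDual_mem_Psym hA.1, fun B hB =>
    (continuousOn_finsetSum (Finset.univ : Finset (Fin (n + 1))) fun _ _ =>
      (WeakBilin.eval_continuous (topDualPairing 𝕜 E).flip φ).continuousOn.smul
        (hA.2 B hB)).congr fun _ _ => mulDual_apply A _⟩

theorem mulDual_cons {n : ℕ} {A : E [×n]→L[𝕜] F} (hA : A ∈ Psym 𝕜 E F n) {y : E} (hy : φ y = 1)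
    (w : Fin n → E) :
    mulDual φ n A (Fin.cons y w) = A w + ∑ j, φ (w j) • A (update w j y) := by
  have hremove (j : Fin n) :
      A (j.succ.removeNth (Fin.cons y w : Fin (n + 1) → E)) = A (update w j y) := by
    rw [← Fin.removeNth_update j.succ y, ← Fin.cons_update,
      Psym.apply_removeNth_eq hA (b := 0) (by simp), Fin.removeNth_zero, Fin.tail_cons]
  simp only [mulDual_apply, Fin.sum_univ_succ, Fin.cons_zero, hy, one_smul, Fin.removeNth_zero,
    Fin.tail_cons, Fin.cons_succ, hremove]

variable (φ) (y : E)

/- Writing `x i = φ (x i) • y + (x i - φ (x i) • y)` and expanding multilinearly, the term in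
which the first summand is taken exactly on `S` is multiplied by `S.card + 1` under `mulDual`
(see `divDual_mulDual`); the weight undoes this. -/
def divDual (n : ℕ) : (E [×n + 1]→L[𝕜] F) →L[𝕜] E [×n]→L[𝕜] F :=
  ∑ S : Finset (Fin n), ((S.card : 𝕜) + 1)⁻¹ •
    (ContinuousMultilinearMap.compContinuousLinearMapL
        (fun i => if i ∈ S then φ.smulRight y else 1 - φ.smulRight y) ∘L
      ContinuousLinearMap.apply 𝕜 _ y ∘L
      ((ContinuousMultilinearMap.curryMidEquiv 𝕜 (fun _ : Fin (n + 1) => E) F 0) :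
        (E [×n + 1]→L[𝕜] F) →L[𝕜] E →L[𝕜] E [×n]→L[𝕜] F))

variable {φ y}

theorem divDual_apply {n : ℕ} (B : E [×n + 1]→L[𝕜] F) (x : Fin n → E) :
    divDual φ y n B x = ∑ S : Finset (Fin n), ((S.card : 𝕜) + 1)⁻¹ •
      B (Fin.cons y (S.piecewise (fun i => φ (x i) • y) (fun i => x i - φ (x i) • y))) := by
  simp [divDual]
  refine Finset.sum_congr rfl fun S _ => ?_
  congr 3
  funext i
  by_cases hi : i ∈ S <;> simp [hi]

theorem divDual_mulDual {n : ℕ} {A : E [×n]→L[𝕜] F} (hA : A ∈ Psym 𝕜 E F n) (hy : φ y = 1) :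
    divDual φ y n (mulDual φ n A) = A := by
  ext x
  set w : Finset (Fin n) → Fin n → E :=
    fun S => S.piecewise (fun i => φ (x i) • y) (fun i => x i - φ (x i) • y)
  have hterm (S : Finset (Fin n)) (j : Fin n) :
      φ (w S j) • A (update (w S) j y) = if j ∈ S then A (w S) else 0 := by
    by_cases hj : j ∈ S
    · have hwj : w S j = φ (x j) • y := by simp [w, hj]
      rw [if_pos hj, hwj, map_smul, hy, smul_eq_mul, mul_one, ← A.map_update_smul,
        ← hwj, update_eq_self]
    · simp [w, hj, hy]
  have hmul (S : Finset (Fin n)) :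
      mulDual φ n A (Fin.cons y (w S)) = ((S.card : 𝕜) + 1) • A (w S) := by
    rw [mulDual_cons hA hy, Finset.sum_congr rfl fun j _ => hterm S j, Finset.sum_ite_mem,
      Finset.univ_inter, Finset.sum_const, ← Nat.cast_smul_eq_nsmul 𝕜, add_smul, one_smul,
      add_comm]
  calc divDual φ y n (mulDual φ n A) x = ∑ S, A (w S) := by
        rw [divDual_apply]
        refine Finset.sum_congr rfl fun S _ => ?_
        rw [hmul, smul_smul, inv_mul_cancel₀ (Nat.cast_add_one_ne_zero S.card), one_smul]
    _ = A x := by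
        rw [← A.map_add_univ]
        congr 1
        funext i
        simp

end MulDual

section Embedding

open scoped NNReal

variable (φ : StrongDual 𝕜 E)

def mulDualPw (n : ℕ) : Pw 𝕜 E F n →L[𝕜] Pw 𝕜 E F (n + 1) :=
  (mulDual φ n ∘L (Pw 𝕜 E F n).subtypeL).codRestrict _ fun Q => mulDual_mem_Pw Q.2

variable {φ} {y : E} {n : ℕ}

theorem divDual_mulDualPw (hy : φ y = 1) (Q : Pw 𝕜 E F n) :
    divDual φ y n (mulDualPw φ n Q : E [×n + 1]→L[𝕜] F) = Q :=
  divDual_mulDual Q.2.1 hy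

theorem antilipschitzWith_mulDualPw (hy : φ y = 1) :
    AntilipschitzWith ‖divDual (F := F) φ y n‖₊ (mulDualPw (F := F) φ n) :=
  ContinuousLinearMap.antilipschitz_of_bound _ fun Q => by
    have h := (divDual φ y n).le_opNorm (mulDualPw φ n Q : E [×n + 1]→L[𝕜] F)
    rw [divDual_mulDualPw hy] at h
    exact h

theorem isClosedEmbedding_mulDualPw (hy : φ y = 1) :
    IsClosedEmbedding (mulDualPw (F := F) φ n) := by
  have hcomp : (divDual φ y n ∘ Subtype.val) ∘ mulDualPw φ n = ((↑) : Pw 𝕜 E F n → _) :=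
    funext (divDual_mulDualPw hy)
  refine .of_comp_of_t2 (map_continuous _)
    ((divDual φ y n).continuous.comp continuous_subtype_val) ?_
  rw [hcomp]
  exact (isClosed_Pw n).isClosedEmbedding_subtypeVal

theorem exists_antilipschitzWith_isClosedEmbedding [Nontrivial E] {m : ℕ} (hnm : n ≤ m) :
    ∃ (e : Pw 𝕜 E F n →L[𝕜] Pw 𝕜 E F m) (K : ℝ≥0),
      AntilipschitzWith K e ∧ IsClosedEmbedding e := by
  obtain ⟨y, hy0⟩ := exists_ne (0 : E)
  obtain ⟨φ, hy⟩ := SeparatingDual.exists_eq_one (R := 𝕜) hy0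
  induction m, hnm using Nat.le_induction with
  | base => exact ⟨.id 𝕜 _, 1, .id, .id⟩
  | succ m _ ih =>
    obtain ⟨e, K, he, he'⟩ := ih
    exact ⟨mulDualPw φ m ∘L e, _, (antilipschitzWith_mulDualPw hy).comp he,
      (isClosedEmbedding_mulDualPw hy).comp he'⟩

end Embedding

theorem stmt8 {𝕜 E F : Type*} [RCLike 𝕜] [NormedAddCommGroup E] [NormedSpace 𝕜 E]
    [NormedAddCommGroup F] [NormedSpace 𝕜 F] [Nontrivial E]
    (n m : ℕ) (hnm : n ≤ m) :
    ∃ (e : Pw 𝕜 E F n →L[𝕜] Pw 𝕜 E F m) (c : ℝ), 0 < c ∧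
      (∀ Q : Pw 𝕜 E F n, ‖Q‖ ≤ c * ‖e Q‖) ∧ IsClosed (Set.range e) := by
  obtain ⟨e, K, hK, he⟩ :=
    exists_antilipschitzWith_isClosedEmbedding (𝕜 := 𝕜) (E := E) (F := F) hnm
  refine ⟨e, K + 1, by positivity, fun Q => ?_, he.isClosed_range⟩
  calc ‖Q‖ ≤ K * ‖e Q‖ := hK.le_mul_norm (map_zero e) Q
    _ ≤ (K + 1) * ‖e Q‖ := by gcongr; linarith
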